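/- Let 0 < d_1 < d_2 < ⋯ < d_r be integers, let n_1, …, n_r be positive integers with n = n_1 + ⋯ + n_r, and let Ξ = Z_{d_1}^{n_1} × Z_{d_2}^{n_2} × ⋯ × Z_{d_r}^{n_r} ⊂ ℝ^n. Let Ω = {φ ∈ GL_n(ℝ) : φ(Ξ) = Ξ}. Then every φ ∈ Ω is orthogonal with respect to the standard inner product on ℝ^n; moreover, every φ ∈ Ω preserves each coordinate block corresponding to a factor Z_{d_i}^{n_i} and acts on that block as a signed permutation of its coordinates. Consequently Ω is isomorphic to the direct product over i of the groups of signed n_i × n_i permutation matrices, and |Ω| = ∏_{i=1}^{r} 2^{n_i} · n_i!. -/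

import Mathlib

/-- `Z_d = {-d, -d+2, …, d-2, d} = {k ∈ ℤ : |k| ≤ d, k ≡ d (mod 2)}`, as a subset of `ℝ`. -/
def Zset (d : ℕ) : Set ℝ :=
  {x | ∃ k : ℤ, x = (k : ℝ) ∧ k.natAbs ≤ d ∧ k % 2 = (d : ℤ) % 2}

/-- The product `Z_{a 0} × ⋯ × Z_{a (n-1)}` as a subset of `ℝ^n`.  A product of blocks
`Z_{d_1}^{n_1} × ⋯ × Z_{d_r}^{n_r}` with `0 < d_1 < ⋯ < d_r` corresponds to a monotone
positive coordinate-bound function `a : Fin n → ℕ`: the blocks are the fibers of `a`. -/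
def Zprod {n : ℕ} (a : Fin n → ℕ) : Set (Fin n → ℝ) :=
  {x | ∀ i, x i ∈ Zset (a i)}

/-- A linear automorphism of `ℝ^m` is a signed permutation (matrix) if it sends every
standard basis vector to `±` a standard basis vector. -/
def IsSignedPermMap (m : ℕ) (φ : (Fin m → ℝ) ≃ₗ[ℝ] (Fin m → ℝ)) : Prop :=
  ∀ i, ∃ j, φ (Pi.single i 1) = Pi.single j 1 ∨ φ (Pi.single i 1) = -Pi.single j 1

/-!
An injective linear map `f` with `f(Ξ) ⊆ Ξ` has an integer matrix: `2 f(eᵢ) = f(u) - f(u - 2eᵢ)`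
for the corner `u = (aᵢ)ᵢ`, and two points of `Ξ` have coordinates of equal parity. Evaluating
row `j` of `f` at the corner whose signs match that row gives `∑ᵢ |f(eᵢ)ⱼ| aᵢ ≤ aⱼ`. Summing over
`j`, and using that each column is a nonzero integer vector and so has ℓ¹-norm at least `1`, every
column has ℓ¹-norm exactly `1`: `f` is a signed permutation `eᵢ ↦ ±e_{π i}`. The corner `u` gives
`aᵢ ≤ a_{π i}`, and summing over the permutation forces `a ∘ π = a`. Such maps are block diagonal
for the fibres of `a`, which identifies their group with the product of the signed permutation
groups of the fibres.
-/

open Finset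

section SignedPerm

variable {ι : Type*}

noncomputable def signedPerm (s : ι → ℤˣ) (π : Equiv.Perm ι) : (ι → ℝ) ≃ₗ[ℝ] (ι → ℝ) where
  toFun x j := (s (π.symm j) : ℝ) * x (π.symm j)
  invFun y i := (s i : ℝ) * y (π i)
  map_add' x y := by ext; simp [mul_add]
  map_smul' c x := by ext; simp [mul_left_comm]
  left_inv x := by ext; simp [← mul_assoc, ← Int.cast_mul, ← Units.val_mul]
  right_inv y := by ext; simp [← mul_assoc, ← Int.cast_mul, ← Units.val_mul]

@[simp]
lemma signedPerm_apply_perm (s : ι → ℤˣ) (π : Equiv.Perm ι) (x : ι → ℝ) (i : ι) :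
    signedPerm s π x (π i) = s i * x i := by
  simp [signedPerm]

lemma signedPerm_symm (s : ι → ℤˣ) (π : Equiv.Perm ι) :
    (signedPerm s π).symm = signedPerm (fun j => s (π.symm j)) π.symm := by
  ext x j
  simp [signedPerm]

lemma signedPerm_single [DecidableEq ι] (s : ι → ℤˣ) (π : Equiv.Perm ι) (i : ι) (c : ℝ) :
    signedPerm s π (Pi.single i c) = Pi.single (π i) (s i * c) := by
  ext j
  obtain ⟨k, rfl⟩ := π.surjective j
  by_cases hk : k = i <;> simp [hk]

lemma signedPerm_injective [DecidableEq ι] :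
    Function.Injective fun p : (ι → ℤˣ) × Equiv.Perm ι => signedPerm p.1 p.2 := by
  rintro ⟨s, π⟩ ⟨s', π'⟩ h
  have hi : ∀ i, π i = π' i ∧ s i = s' i := fun i => by
    have := congrFun (LinearEquiv.congr_fun h (Pi.single i 1)) (π i)
    rw [signedPerm_single, signedPerm_single, mul_one, mul_one] at this
    by_cases hπ : π i = π' i
    · simpa [hπ, Units.val_inj] using this
    · simp [Ne.symm hπ] at this
  simp only [Prod.mk.injEq]
  exact ⟨funext fun i => (hi i).2, Equiv.ext fun i => (hi i).1⟩

lemma sum_signedPerm_mul [Fintype ι] (s : ι → ℤˣ) (π : Equiv.Perm ι) (x y : ι → ℝ) :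
    ∑ j, signedPerm s π x j * signedPerm s π y j = ∑ i, x i * y i := by
  rw [← Equiv.sum_comp π]
  refine sum_congr rfl fun i _ => ?_
  rcases Int.units_eq_one_or (s i) with h | h <;> simp [h]

end SignedPerm

section BlockSignedPerm

variable {ι β : Type*} [DecidableEq ι]

def IsBlockSignedPerm (a : ι → β) (φ : (ι → ℝ) ≃ₗ[ℝ] (ι → ℝ)) : Prop :=
  ∀ i, ∃ j, a j = a i ∧ (φ (Pi.single i 1) = Pi.single j 1 ∨ φ (Pi.single i 1) = -Pi.single j 1)

lemma eq_single_or_eq_neg_single_iff {y : ι → ℝ} {j : ι} :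
    (y = Pi.single j 1 ∨ y = -Pi.single j 1) ↔ ∃ s : ℤˣ, y = Pi.single j (s : ℝ) := by
  constructor
  · rintro (rfl | rfl)
    exacts [⟨1, by simp⟩, ⟨-1, by simp [Pi.single_neg]⟩]
  · rintro ⟨s, rfl⟩
    rcases Int.units_eq_one_or s with rfl | rfl <;> simp [Pi.single_neg]

lemma injective_of_apply_single_eq (f : (ι → ℝ) →ₗ[ℝ] (ι → ℝ)) (hf : Function.Injective f)
    {J : ι → ι} {c : ι → ℝ} (hc : ∀ i, c i ≠ 0)
    (h : ∀ i, f (Pi.single i 1) = Pi.single (J i) (c i)) : Function.Injective J := by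
  intro i i' hJ
  by_contra hne
  have hker : f (c i' • Pi.single i 1 - c i • Pi.single i' 1) = 0 := by
    rw [map_sub, map_smul, map_smul, h, h, hJ, ← Pi.single_smul', ← Pi.single_smul',
      smul_eq_mul, smul_eq_mul, mul_comm, sub_self]
  have := congrFun (hf (hker.trans (map_zero f).symm)) i
  simp [hne, hc i'] at this

variable [Fintype ι]

lemma exists_perm_eq_signedPerm (φ : (ι → ℝ) ≃ₗ[ℝ] (ι → ℝ)) {J : ι → ι} {s : ι → ℤˣ}
    (h : ∀ i, φ (Pi.single i 1) = Pi.single (J i) (s i : ℝ)) :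
    ∃ π : Equiv.Perm ι, ⇑π = J ∧ φ = signedPerm s π := by
  have hJ : Function.Injective J :=
    injective_of_apply_single_eq φ.toLinearMap φ.injective (by simp) h
  refine ⟨Equiv.ofBijective J (Finite.injective_iff_bijective.mp hJ), rfl, ?_⟩
  refine LinearEquiv.toLinearMap_injective (LinearMap.pi_ext' fun i => LinearMap.ext_ring ?_)
  simp [h, signedPerm_single]

lemma isBlockSignedPerm_iff {a : ι → β} {φ : (ι → ℝ) ≃ₗ[ℝ] (ι → ℝ)} :
    IsBlockSignedPerm a φ ↔ ∃ s π, (∀ i, a (π i) = a i) ∧ φ = signedPerm s π := by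
  constructor
  · intro h
    choose J hJa hJ using h
    simp_rw [eq_single_or_eq_neg_single_iff] at hJ
    choose s hs using hJ
    obtain ⟨π, rfl, rfl⟩ := exists_perm_eq_signedPerm φ hs
    exact ⟨s, π, hJa, rfl⟩
  · rintro ⟨s, π, hπ, rfl⟩ i
    exact ⟨π i, hπ i, eq_single_or_eq_neg_single_iff.mpr ⟨s i, by rw [signedPerm_single, mul_one]⟩⟩

lemma IsBlockSignedPerm.apply_eq_zero {a : ι → β} {φ : (ι → ℝ) ≃ₗ[ℝ] (ι → ℝ)}
    (h : IsBlockSignedPerm a φ) {y : ι → ℝ} {b : β} (hy : ∀ i, a i ≠ b → y i = 0) {j : ι}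
    (hj : a j ≠ b) : φ y j = 0 := by
  obtain ⟨s, π, hπ, rfl⟩ := isBlockSignedPerm_iff.mp h
  obtain ⟨i, rfl⟩ := π.surjective j
  rw [signedPerm_apply_perm, hy i (hπ i ▸ hj), mul_zero]

lemma IsBlockSignedPerm.sum_mul_apply {a : ι → β} {φ : (ι → ℝ) ≃ₗ[ℝ] (ι → ℝ)}
    (h : IsBlockSignedPerm a φ) (x y : ι → ℝ) : ∑ j, φ x j * φ y j = ∑ i, x i * y i := by
  obtain ⟨s, π, -, rfl⟩ := isBlockSignedPerm_iff.mp h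
  exact sum_signedPerm_mul s π x y

def blockSignedPerms (a : ι → β) : Subgroup ((ι → ℝ) ≃ₗ[ℝ] (ι → ℝ)) where
  carrier := {φ | IsBlockSignedPerm a φ}
  one_mem' i := ⟨i, rfl, Or.inl rfl⟩
  mul_mem' {φ ψ} hφ hψ i := by
    obtain ⟨j, hj, hψi⟩ := hψ i
    obtain ⟨k, hk, hφj⟩ := hφ j
    refine ⟨k, hk.trans hj, ?_⟩
    change φ (ψ _) = _ ∨ φ (ψ _) = _
    rcases hψi with h | h <;> rcases hφj with h' | h' <;> simp [h, h']
  inv_mem' {φ} hφ := by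
    obtain ⟨s, π, hπ, rfl⟩ := isBlockSignedPerm_iff.mp hφ
    refine isBlockSignedPerm_iff.mpr ⟨_, π.symm, fun i => ?_, signedPerm_symm s π⟩
    rw [← hπ, Equiv.apply_symm_apply]

lemma mem_blockSignedPerms {a : ι → β} {φ : (ι → ℝ) ≃ₗ[ℝ] (ι → ℝ)} :
    φ ∈ blockSignedPerms a ↔ IsBlockSignedPerm a φ := Iff.rfl

end BlockSignedPerm

section SignedPerms

variable (ι : Type*) [Fintype ι] [DecidableEq ι]

abbrev signedPerms : Subgroup ((ι → ℝ) ≃ₗ[ℝ] (ι → ℝ)) := blockSignedPerms fun _ : ι => ()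

variable {ι}

lemma card_signedPerms :
    Nat.card (signedPerms ι) = 2 ^ Fintype.card ι * (Fintype.card ι).factorial := by
  have hbij : Function.Bijective fun p : (ι → ℤˣ) × Equiv.Perm ι =>
      (⟨signedPerm p.1 p.2, isBlockSignedPerm_iff.mpr ⟨p.1, p.2, fun _ => rfl, rfl⟩⟩ :
        signedPerms ι) := by
    refine ⟨fun p q h => signedPerm_injective (congrArg Subtype.val h), fun φ => ?_⟩
    obtain ⟨s, π, -, h⟩ := isBlockSignedPerm_iff.mp φ.2
    exact ⟨(s, π), Subtype.ext h.symm⟩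
  rw [← Nat.card_congr (Equiv.ofBijective _ hbij), Nat.card_prod, Nat.card_fun, Nat.card_perm]
  simp [Nat.card_eq_fintype_card]

lemma mem_signedPerms_iff {m : ℕ} {φ : (Fin m → ℝ) ≃ₗ[ℝ] (Fin m → ℝ)} :
    φ ∈ signedPerms (Fin m) ↔ IsSignedPermMap m φ := by
  simp [mem_blockSignedPerms, IsBlockSignedPerm, IsSignedPermMap]

end SignedPerms

lemma apply_perm_eq_of_le {ι M : Type*} [Fintype ι] [AddCommMonoid M] [PartialOrder M]
    [IsOrderedCancelAddMonoid M] {f : ι → M} {σ : Equiv.Perm ι} (h : ∀ i, f i ≤ f (σ i))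
    (i : ι) : f (σ i) = f i :=
  ((sum_eq_sum_iff_of_le fun i _ => h i).mp (Equiv.sum_comp σ f).symm i (mem_univ i)).symm

lemma apply_eq_sum_mul_apply_single {ι : Type*} [Fintype ι] [DecidableEq ι]
    (f : (ι → ℝ) →ₗ[ℝ] (ι → ℝ)) (x : ι → ℝ) (j : ι) :
    f x j = ∑ i, x i * f (Pi.single i 1) j := by
  conv_lhs => rw [← univ_sum_single x]
  rw [map_sum, Finset.sum_apply]
  refine sum_congr rfl fun i _ => ?_
  rw [show Pi.single i (x i) = x i • Pi.single i (1 : ℝ) by simp [← Pi.single_smul'], map_smul]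
  rfl

lemma exists_eq_single_of_sum_abs_eq_one {ι : Type*} [Fintype ι] [DecidableEq ι] {v : ι → ℝ}
    (hint : ∀ j, ∃ k : ℤ, v j = k) (hv : ∑ j, |v j| = 1) :
    ∃ j, v = Pi.single j 1 ∨ v = -Pi.single j 1 := by
  obtain ⟨j, hj⟩ : ∃ j, v j ≠ 0 := by
    by_contra! h
    simp [h] at hv
  have hsplit := add_sum_erase univ (fun l => |v l|) (mem_univ j)
  have hj1 : 1 ≤ |v j| := by
    obtain ⟨k, hk⟩ := hint j
    rw [hk] at hj ⊢
    exact_mod_cast Int.one_le_abs (by exact_mod_cast hj)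
  have hrest : ∑ l ∈ univ.erase j, |v l| = 0 := by
    linarith [sum_nonneg fun l (_ : l ∈ univ.erase j) => abs_nonneg (v l)]
  have hvj : |v j| = 1 := by linarith
  have hsupp : v = Pi.single j (v j) := by
    ext l
    by_cases hl : l = j
    · subst hl; simp
    · simpa [hl] using (sum_eq_zero_iff_of_nonneg fun l _ => abs_nonneg (v l)).mp hrest l
        (mem_erase.mpr ⟨hl, mem_univ l⟩)
  refine ⟨j, ?_⟩
  rcases (abs_eq zero_le_one).mp hvj with h | h <;> rw [hsupp, h] <;> simp [Pi.single_neg]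

lemma natCast_mem_Zset (d : ℕ) : (d : ℝ) ∈ Zset d := ⟨d, by simp, by simp, rfl⟩

lemma units_mul_mem_Zset {d : ℕ} {x : ℝ} (s : ℤˣ) (hx : x ∈ Zset d) : (s : ℝ) * x ∈ Zset d := by
  obtain ⟨k, rfl, hk, hpar⟩ := hx
  rcases Int.units_eq_one_or s with rfl | rfl
  · exact ⟨k, by simp, hk, hpar⟩
  · exact ⟨-k, by simp, by simpa using hk, by omega⟩

lemma neg_natCast_mem_Zset (d : ℕ) : -(d : ℝ) ∈ Zset d := by
  simpa using units_mul_mem_Zset (-1) (natCast_mem_Zset d)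

lemma natCast_sub_two_mem_Zset {d : ℕ} (hd : 0 < d) : (d : ℝ) - 2 ∈ Zset d :=
  ⟨d - 2, by push_cast; ring, by omega, by omega⟩

lemma abs_le_of_mem_Zset {d : ℕ} {x : ℝ} (hx : x ∈ Zset d) : |x| ≤ d := by
  obtain ⟨k, rfl, hk, -⟩ := hx
  rw [← Int.cast_abs, Int.abs_eq_natAbs]
  exact_mod_cast hk

lemma exists_sub_eq_two_mul_of_mem_Zset {d : ℕ} {x y : ℝ} (hx : x ∈ Zset d) (hy : y ∈ Zset d) :
    ∃ k : ℤ, x - y = 2 * k := by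
  obtain ⟨k, rfl, -, hk⟩ := hx
  obtain ⟨l, rfl, -, hl⟩ := hy
  obtain ⟨m, hm⟩ : (2 : ℤ) ∣ k - l := by omega
  exact ⟨m, by rw [← Int.cast_sub, hm]; push_cast; ring⟩

section Zprod

variable {n : ℕ} {a : Fin n → ℕ}

lemma exists_int_eq_apply_single (hapos : ∀ i, 0 < a i) {f : (Fin n → ℝ) →ₗ[ℝ] (Fin n → ℝ)}
    (hf : Set.MapsTo f (Zprod a) (Zprod a)) (i j : Fin n) :
    ∃ k : ℤ, f (Pi.single i 1) j = k := by
  set u : Fin n → ℝ := fun l => a l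
  have hu : u ∈ Zprod a := fun l => natCast_mem_Zset (a l)
  have hu' : u - Pi.single i 2 ∈ Zprod a := fun l => by
    by_cases hl : l = i
    · subst hl; simpa [u] using natCast_sub_two_mem_Zset (hapos l)
    · simpa [u, hl] using natCast_mem_Zset (a l)
  obtain ⟨k, hk⟩ := exists_sub_eq_two_mul_of_mem_Zset (hf hu j) (hf hu' j)
  have h2 : (Pi.single i 2 : Fin n → ℝ) = (2 : ℝ) • Pi.single i 1 := by simp [← Pi.single_smul']
  rw [map_sub, Pi.sub_apply, sub_sub_cancel, h2, map_smul, Pi.smul_apply, smul_eq_mul] at hk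
  exact ⟨k, by linarith⟩

lemma sum_abs_apply_single_mul_le {f : (Fin n → ℝ) →ₗ[ℝ] (Fin n → ℝ)}
    (hf : Set.MapsTo f (Zprod a) (Zprod a)) (j : Fin n) :
    ∑ i, |f (Pi.single i 1) j| * a i ≤ a j := by
  set x : Fin n → ℝ := fun i => if 0 ≤ f (Pi.single i 1) j then (a i : ℝ) else -a i
  have hx : x ∈ Zprod a := fun i => by
    dsimp only [x]
    split_ifs
    exacts [natCast_mem_Zset _, neg_natCast_mem_Zset _]
  calc ∑ i, |f (Pi.single i 1) j| * a i = f x j := by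
        rw [apply_eq_sum_mul_apply_single]
        refine sum_congr rfl fun i _ => ?_
        dsimp only [x]
        split_ifs with h
        · rw [abs_of_nonneg h, mul_comm]
        · rw [abs_of_neg (not_le.mp h)]; ring
    _ ≤ |f x j| := le_abs_self _
    _ ≤ a j := abs_le_of_mem_Zset (hf hx j)

lemma sum_abs_apply_single_eq_one (hapos : ∀ i, 0 < a i) {f : (Fin n → ℝ) →ₗ[ℝ] (Fin n → ℝ)}
    (hinj : Function.Injective f) (hf : Set.MapsTo f (Zprod a) (Zprod a)) (i : Fin n) :
    ∑ j, |f (Pi.single i 1) j| = 1 := by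
  have hcol : ∀ i, 1 ≤ ∑ j, |f (Pi.single i 1) j| := fun i => by
    obtain ⟨j, hj⟩ : ∃ j, f (Pi.single i 1) j ≠ 0 := by
      by_contra! h
      have := hinj ((funext h).trans (map_zero f).symm)
      simpa using congrFun this i
    obtain ⟨k, hk⟩ := exists_int_eq_apply_single hapos hf i j
    calc (1 : ℝ) ≤ |f (Pi.single i 1) j| := by
          rw [hk] at hj ⊢
          exact_mod_cast Int.one_le_abs (by exact_mod_cast hj)
      _ ≤ _ := single_le_sum (fun j _ => abs_nonneg (f (Pi.single i 1) j)) (mem_univ j)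
  have hle : ∀ i ∈ univ, (a i : ℝ) ≤ a i * ∑ j, |f (Pi.single i 1) j| :=
    fun i _ => le_mul_of_one_le_right (Nat.cast_nonneg _) (hcol i)
  have htot : ∑ i, (a i : ℝ) * ∑ j, |f (Pi.single i 1) j| ≤ ∑ i, (a i : ℝ) := calc
    _ = ∑ j, ∑ i, |f (Pi.single i 1) j| * a i := by simp_rw [mul_sum, mul_comm]; exact sum_comm
    _ ≤ _ := sum_le_sum fun j _ => sum_abs_apply_single_mul_le hf j
  have := (sum_eq_sum_iff_of_le hle).mp (le_antisymm (sum_le_sum hle) htot) i (mem_univ i)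
  exact (mul_eq_left₀ (by exact_mod_cast (hapos i).ne')).mp this.symm

lemma isBlockSignedPerm_of_mapsTo (hapos : ∀ i, 0 < a i) {φ : (Fin n → ℝ) ≃ₗ[ℝ] (Fin n → ℝ)}
    (hφ : Set.MapsTo φ (Zprod a) (Zprod a)) : IsBlockSignedPerm a φ := by
  have h : ∀ i, ∃ j, ∃ s : ℤˣ, φ (Pi.single i 1) = Pi.single j (s : ℝ) := fun i => by
    obtain ⟨j, hj⟩ := exists_eq_single_of_sum_abs_eq_one (exists_int_eq_apply_single hapos hφ i)
      (sum_abs_apply_single_eq_one hapos (f := φ.toLinearMap) φ.injective hφ i)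
    exact ⟨j, eq_single_or_eq_neg_single_iff.mp hj⟩
  choose J s hs using h
  obtain ⟨π, -, rfl⟩ := exists_perm_eq_signedPerm φ hs
  have hle : ∀ i, a i ≤ a (π i) := fun i => by
    have := abs_le_of_mem_Zset (hφ (fun l => natCast_mem_Zset (a l)) (π i))
    rcases Int.units_eq_one_or (s i) with h | h <;> simpa [h] using this
  exact isBlockSignedPerm_iff.mpr ⟨s, π, apply_perm_eq_of_le hle, rfl⟩

lemma IsBlockSignedPerm.mapsTo_Zprod {φ : (Fin n → ℝ) ≃ₗ[ℝ] (Fin n → ℝ)}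
    (h : IsBlockSignedPerm a φ) : Set.MapsTo φ (Zprod a) (Zprod a) := by
  obtain ⟨s, π, hπ, rfl⟩ := isBlockSignedPerm_iff.mp h
  intro x hx j
  obtain ⟨i, rfl⟩ := π.surjective j
  rw [signedPerm_apply_perm, hπ]
  exact units_mul_mem_Zset (s i) (hx i)

lemma image_Zprod_eq_iff (hapos : ∀ i, 0 < a i) (φ : (Fin n → ℝ) ≃ₗ[ℝ] (Fin n → ℝ)) :
    φ '' Zprod a = Zprod a ↔ IsBlockSignedPerm a φ := by
  refine ⟨fun h => isBlockSignedPerm_of_mapsTo hapos fun x hx => h ▸ Set.mem_image_of_mem φ hx,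
    fun h => (h.mapsTo_Zprod.image_subset).antisymm fun x hx => ?_⟩
  have hinv : IsBlockSignedPerm a φ.symm := inv_mem (mem_blockSignedPerms.mpr h)
  exact ⟨φ.symm x, hinv.mapsTo_Zprod hx, φ.apply_symm_apply x⟩

end Zprod

lemma LinearEquiv.piCongrRight_single {κ : Type*} [DecidableEq κ] {M : κ → Type*}
    [∀ k, AddCommMonoid (M k)] [∀ k, Module ℝ (M k)] (g : ∀ k, M k ≃ₗ[ℝ] M k) (k : κ) (w : M k) :
    LinearEquiv.piCongrRight g (Pi.single k w) = Pi.single k (g k w) :=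
  funext (Pi.apply_single (fun k => g k) (fun k => map_zero (g k)) k w)

section Blocks

variable {ι β : Type*} [Fintype ι] [DecidableEq β] (a : ι → β)

noncomputable def fiberSigmaEquiv : (Σ v : univ.image a, Fin #{i | a i = v.1}) ≃ ι :=
  (Equiv.sigmaCongrRight fun _ => (Fintype.equivFinOfCardEq (Fintype.card_subtype _)).symm).trans
    (Equiv.sigmaSubtypeFiberEquiv a (· ∈ univ.image a) fun i => mem_image_of_mem a (mem_univ i))

lemma apply_fiberSigmaEquiv (x : Σ v : univ.image a, Fin #{i | a i = v.1}) :
    a (fiberSigmaEquiv a x) = x.1 :=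
  ((Fintype.equivFinOfCardEq (Fintype.card_subtype _)).symm x.2).2

abbrev fiberSpace (v : univ.image a) : Type := Fin #{i | a i = v.1} → ℝ

noncomputable def blockCoords : (ι → ℝ) ≃ₗ[ℝ] Π v : univ.image a, fiberSpace a v :=
  LinearEquiv.funCongrLeft ℝ ℝ (fiberSigmaEquiv a) ≪≫ₗ LinearEquiv.piCurry ℝ fun _ _ => ℝ

lemma blockCoords_symm_apply (z : Π v : univ.image a, fiberSpace a v)
    (x : Σ v : univ.image a, Fin #{i | a i = v.1}) :
    (blockCoords a).symm z (fiberSigmaEquiv a x) = z x.1 x.2 := by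
  simp [blockCoords, LinearEquiv.funCongrLeft_symm, LinearMap.funLeft_apply]
  rfl

lemma blockCoords_single [DecidableEq ι] (x : Σ v : univ.image a, Fin #{i | a i = v.1}) (c : ℝ) :
    blockCoords a (Pi.single (fiberSigmaEquiv a x) c) = Pi.single x.1 (Pi.single x.2 c) := by
  change Sigma.curry (γ := fun _ _ => ℝ) (Pi.single (fiberSigmaEquiv a x) c ∘ fiberSigmaEquiv a) = _
  rw [Pi.single_comp_equiv, Equiv.symm_apply_apply]
  exact Sigma.curry_single (γ := fun _ _ => ℝ) x c

lemma blockCoords_symm_single [DecidableEq ι] (v : univ.image a) (t : Fin #{i | a i = v.1})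
    (c : ℝ) :
    (blockCoords a).symm (Pi.single v (Pi.single t c)) = Pi.single (fiberSigmaEquiv a ⟨v, t⟩) c :=
  (blockCoords a).symm_apply_eq.mpr (blockCoords_single a ⟨v, t⟩ c).symm

lemma blockCoords_symm_single_apply_eq_zero (v : univ.image a) (w : fiberSpace a v)
    {i : ι} (hi : a i ≠ v) : (blockCoords a).symm (Pi.single v w) i = 0 := by
  obtain ⟨x, rfl⟩ := (fiberSigmaEquiv a).surjective i
  rw [apply_fiberSigmaEquiv a] at hi
  rw [blockCoords_symm_apply, Pi.single_eq_of_ne (fun h => hi (congrArg Subtype.val h)),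
    Pi.zero_apply]

noncomputable def blockDiag : (Π v : univ.image a, fiberSpace a v ≃ₗ[ℝ] fiberSpace a v)
    →* ((ι → ℝ) ≃ₗ[ℝ] (ι → ℝ)) where
  toFun g := blockCoords a ≪≫ₗ LinearEquiv.piCongrRight g ≪≫ₗ (blockCoords a).symm
  map_one' := LinearEquiv.ext (blockCoords a).symm_apply_apply
  map_mul' g h := LinearEquiv.ext fun y => by simp; rfl

lemma blockDiag_apply_single [DecidableEq ι]
    (g : Π v : univ.image a, fiberSpace a v ≃ₗ[ℝ] fiberSpace a v)
    (x : Σ v : univ.image a, Fin #{i | a i = v.1}) :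
    blockDiag a g (Pi.single (fiberSigmaEquiv a x) 1) =
      (blockCoords a).symm (Pi.single x.1 (g x.1 (Pi.single x.2 1))) := by
  change (blockCoords a).symm (LinearEquiv.piCongrRight g (blockCoords a _)) = _
  rw [blockCoords_single, LinearEquiv.piCongrRight_single]

lemma blockDiag_injective : Function.Injective (blockDiag a) := by
  intro g h hgh
  funext v
  refine LinearEquiv.ext fun w => Pi.single_injective (M := fiberSpace a) v ?_
  have := congrArg (blockCoords a)
    (LinearEquiv.congr_fun hgh ((blockCoords a).symm (Pi.single v w)))
  simpa [blockDiag, LinearEquiv.piCongrRight_single] using this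

lemma blockDiag_mem_iff [DecidableEq ι]
    (g : Π v : univ.image a, fiberSpace a v ≃ₗ[ℝ] fiberSpace a v) :
    blockDiag a g ∈ blockSignedPerms a ↔ ∀ v, g v ∈ signedPerms _ := by
  constructor
  · intro h v t
    obtain ⟨j, hj, hgj⟩ := h (fiberSigmaEquiv a ⟨v, t⟩)
    obtain ⟨⟨w, t'⟩, rfl⟩ := (fiberSigmaEquiv a).surjective j
    rw [apply_fiberSigmaEquiv a, apply_fiberSigmaEquiv a] at hj
    obtain rfl : w = v := Subtype.ext hj
    refine ⟨t', rfl, ?_⟩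
    rw [blockDiag_apply_single, ← blockCoords_symm_single, ← map_neg, ← Pi.single_neg] at hgj
    simpa only [(blockCoords a).symm.injective.eq_iff, Pi.single_injective _ |>.eq_iff] using hgj
  · intro hg i
    obtain ⟨⟨v, t⟩, rfl⟩ := (fiberSigmaEquiv a).surjective i
    obtain ⟨t', -, hgt⟩ := hg v t
    refine ⟨fiberSigmaEquiv a ⟨v, t'⟩, by rw [apply_fiberSigmaEquiv a, apply_fiberSigmaEquiv a], ?_⟩
    rw [blockDiag_apply_single, ← blockCoords_symm_single, ← map_neg, ← Pi.single_neg]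
    rcases hgt with h | h <;> simp only [h, true_or, or_true]

lemma exists_blockDiag_eq [DecidableEq ι] {φ : (ι → ℝ) ≃ₗ[ℝ] (ι → ℝ)}
    (hφ : φ ∈ blockSignedPerms a) : ∃ g, blockDiag a g = φ := by
  -- In block coordinates `φ` preserves every factor, so it is the product of its diagonal blocks.
  set ψ := (blockCoords a).symm ≪≫ₗ φ ≪≫ₗ blockCoords a
  let comp (v : univ.image a) : fiberSpace a v →ₗ[ℝ] fiberSpace a v :=
    LinearMap.proj v ∘ₗ ψ.toLinearMap ∘ₗ LinearMap.single ℝ (fiberSpace a) v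
  have hψ : ∀ v w, ψ (Pi.single v w) = Pi.single v (comp v w) := fun v w => by
    ext u t
    by_cases hu : u = v
    · subst hu; simp [comp]
    · rw [Pi.single_eq_of_ne hu, Pi.zero_apply]
      refine hφ.apply_eq_zero (b := v.1) (fun i hi => ?_) ?_
      · exact blockCoords_symm_single_apply_eq_zero a v w hi
      · rw [apply_fiberSigmaEquiv a]; exact fun h => hu (Subtype.ext h)
  have hinj : ∀ v, Function.Injective (comp v) := fun v => by
    refine (injective_iff_map_eq_zero _).mpr fun w hw =>
      Pi.single_injective (M := fiberSpace a) v ?_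
    rw [Pi.single_zero, ← ψ.map_eq_zero_iff, hψ, hw, Pi.single_zero]
  set g := fun v => LinearEquiv.ofInjectiveEndo (comp v) (hinj v)
  have hpi : LinearEquiv.piCongrRight g = ψ :=
    LinearEquiv.toLinearMap_injective <| LinearMap.pi_ext fun v w => by
      simp [g, LinearEquiv.piCongrRight_single, hψ]
  have hg : blockDiag a g = blockCoords a ≪≫ₗ ψ ≪≫ₗ (blockCoords a).symm := by rw [← hpi]; rfl
  exact ⟨g, LinearEquiv.ext fun y => by simp [hg, ψ]⟩

noncomputable def blockDiagSignedPerms [DecidableEq ι] :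
    (Π v : univ.image a, signedPerms (Fin #{i | a i = v.1})) →* blockSignedPerms a :=
  ((blockDiag a).comp (MonoidHom.piMap fun _ => (signedPerms _).subtype)).codRestrict _
    fun g => (blockDiag_mem_iff a _).mpr fun v => (g v).2

lemma blockDiagSignedPerms_bijective [DecidableEq ι] :
    Function.Bijective (blockDiagSignedPerms a) := by
  refine ⟨fun g h hgh => funext fun v => Subtype.ext ?_, fun φ => ?_⟩
  · exact congrFun (blockDiag_injective a (congrArg Subtype.val hgh)) v
  · obtain ⟨g, hg⟩ := exists_blockDiag_eq a φ.2
    exact ⟨fun v => ⟨g v, (blockDiag_mem_iff a g).mp (hg ▸ φ.2) v⟩, Subtype.ext hg⟩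

lemma card_blockSignedPerms [DecidableEq ι] :
    Nat.card (blockSignedPerms a) =
      ∏ v ∈ univ.image a, 2 ^ #{i | a i = v} * (#{i | a i = v}).factorial := by
  rw [← Nat.card_congr (MulEquiv.ofBijective _ (blockDiagSignedPerms_bijective a)).toEquiv,
    Nat.card_pi]
  simp only [card_signedPerms, Fintype.card_fin]
  exact prod_coe_sort (univ.image a) fun v => 2 ^ #{i | a i = v} * (#{i | a i = v}).factorial

end Blocks

theorem stmt11_general (n : ℕ) (a : Fin n → ℕ) (hapos : ∀ i, 0 < a i) :
    (∀ φ : (Fin n → ℝ) ≃ₗ[ℝ] (Fin n → ℝ), φ '' Zprod a = Zprod a →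
      (∀ x y : Fin n → ℝ, ∑ i, φ x i * φ y i = ∑ i, x i * y i) ∧
      (∀ i : Fin n, ∃ j : Fin n, a j = a i ∧
        (φ (Pi.single i 1) = Pi.single j 1 ∨ φ (Pi.single i 1) = -Pi.single j 1))) ∧
    ∃ Ω : Subgroup ((Fin n → ℝ) ≃ₗ[ℝ] (Fin n → ℝ)),
      (∀ φ, φ ∈ Ω ↔ φ '' Zprod a = Zprod a) ∧
      Nat.card Ω = ∏ v ∈ Finset.univ.image a,
        2 ^ (Finset.univ.filter fun i => a i = v).card *
          (Finset.univ.filter fun i => a i = v).card.factorial ∧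
      ∃ ΩB : ∀ v : ↥(Finset.univ.image a),
          Subgroup ((Fin (Finset.univ.filter fun i => a i = v.1).card → ℝ) ≃ₗ[ℝ]
            (Fin (Finset.univ.filter fun i => a i = v.1).card → ℝ)),
        (∀ (v : ↥(Finset.univ.image a))
            (φ : (Fin (Finset.univ.filter fun i => a i = v.1).card → ℝ) ≃ₗ[ℝ]
              (Fin (Finset.univ.filter fun i => a i = v.1).card → ℝ)),
          φ ∈ ΩB v ↔ IsSignedPermMap _ φ) ∧
        Nonempty (Ω ≃* ∀ v, ΩB v) := by
  refine ⟨fun φ hφ => ?_, blockSignedPerms a, fun φ => (image_Zprod_eq_iff hapos φ).symm,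
    card_blockSignedPerms a, fun v => signedPerms _, fun v φ => mem_signedPerms_iff,
    ⟨(MulEquiv.ofBijective _ (blockDiagSignedPerms_bijective a)).symm⟩⟩
  have h := (image_Zprod_eq_iff hapos φ).mp hφ
  exact ⟨h.sum_mul_apply, h⟩

/-- Every linear automorphism of `ℝ^n` preserving `Ξ = Z_{d_1}^{n_1} × ⋯ × Z_{d_r}^{n_r}`
(the blocks being the fibers of the monotone positive bound function `a`) is orthogonal and
acts on each block as a signed permutation of its coordinates; the group `Ω` of all such
automorphisms is isomorphic to the direct product of the groups of signed `n_i × n_i`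
permutation matrices and has order `∏ᵢ 2^{n_i} · n_i!`. -/
theorem stmt11 (n : ℕ) (hn : 0 < n) (a : Fin n → ℕ)
    (ha : Monotone a) (hapos : ∀ i, 0 < a i) :
    (∀ φ : (Fin n → ℝ) ≃ₗ[ℝ] (Fin n → ℝ), φ '' Zprod a = Zprod a →
      (∀ x y : Fin n → ℝ, ∑ i, φ x i * φ y i = ∑ i, x i * y i) ∧
      (∀ i : Fin n, ∃ j : Fin n, a j = a i ∧
        (φ (Pi.single i 1) = Pi.single j 1 ∨ φ (Pi.single i 1) = -Pi.single j 1))) ∧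
    ∃ Ω : Subgroup ((Fin n → ℝ) ≃ₗ[ℝ] (Fin n → ℝ)),
      (∀ φ, φ ∈ Ω ↔ φ '' Zprod a = Zprod a) ∧
      Nat.card Ω = ∏ v ∈ Finset.univ.image a,
        2 ^ (Finset.univ.filter fun i => a i = v).card *
          (Finset.univ.filter fun i => a i = v).card.factorial ∧
      ∃ ΩB : ∀ v : ↥(Finset.univ.image a),
          Subgroup ((Fin (Finset.univ.filter fun i => a i = v.1).card → ℝ) ≃ₗ[ℝ]
            (Fin (Finset.univ.filter fun i => a i = v.1).card → ℝ)),
        (∀ (v : ↥(Finset.univ.image a))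
            (φ : (Fin (Finset.univ.filter fun i => a i = v.1).card → ℝ) ≃ₗ[ℝ]
              (Fin (Finset.univ.filter fun i => a i = v.1).card → ℝ)),
          φ ∈ ΩB v ↔ IsSignedPermMap _ φ) ∧
        Nonempty (Ω ≃* ∀ v, ΩB v) :=
  stmt11_general n a hapos
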